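/- arXiv:2412.03086 — 4 statements merged into one kernel-verified Lean document; each statement's English description precedes it below -/
import Mathlib

section
/- Let x₁,…,x_N be pairwise distinct elements of a field F of characteristic 0. Then for every m ≥ 0, h_m(x₁,…,x_N) = Σ_{j=1}^N x_j^{m+N−1} / ∏_{k≠j} (x_j − x_k). -/
/-!
Write `D_s(r) = ∑_{j ∈ s} x_j ^ r / ∏_{k ∈ s, k ≠ j} (x_j - x_k)` for the divided difference of
`t ↦ t ^ r` at the nodes `x_s`. Lagrange interpolation of `X ^ (|s| - 1)` gives `D_s(|s| - 1) = 1`,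
and splitting off a node `i` gives `D_{s ∪ {i}}(r + 1) = x_i D_{s ∪ {i}}(r) + D_s(r)`, the same
recurrence as `h_{m+1}(x_{s ∪ {i}}) = x_i h_m(x_{s ∪ {i}}) + h_{m+1}(x_s)`. An induction on the
degree and then on the nodes identifies `D_s(m + |s| - 1)` with `h_m(x_s)`.
-/

/-- Complete homogeneous polynomial of degree `m` in variables `x j`, `j : ι`. -/
noncomputable def homog {ι : Type*} [Fintype ι] [DecidableEq ι] {R : Type*} [CommSemiring R]
    (m : ℕ) (x : ι → R) : R :=
  ∑ k ∈ Finset.univ.piAntidiag m, ∏ j, x j ^ k j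

open Finset

noncomputable def homogOn {ι R : Type*} [DecidableEq ι] [CommSemiring R]
    (s : Finset ι) (m : ℕ) (x : ι → R) : R :=
  ∑ k ∈ s.piAntidiag m, ∏ j ∈ s, x j ^ k j

noncomputable def divDiffPow {ι F : Type*} [DecidableEq ι] [Field F]
    (s : Finset ι) (x : ι → F) (r : ℕ) : F :=
  ∑ j ∈ s, x j ^ r / ∏ k ∈ s.erase j, (x j - x k)

section homogOn

variable {ι R : Type*} [DecidableEq ι] [CommSemiring R] (x : ι → R)

theorem homogOn_cons {i : ι} {t : Finset ι} (hi : i ∉ t) (n : ℕ) :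
    homogOn (cons i t hi) n x
      = ∑ p ∈ antidiagonal n, x i ^ p.1 * homogOn t p.2 x := by
  rw [homogOn, piAntidiag_cons hi, sum_disjiUnion]
  refine sum_congr rfl fun p _ => ?_
  rw [sum_map, homogOn, mul_sum]
  refine sum_congr rfl fun k hk => ?_
  have hki : k i = 0 := by
    by_contra h
    exact hi ((mem_piAntidiag.mp hk).2 i h)
  have hne : ∀ j ∈ t, j ≠ i := fun j hj h => hi (h ▸ hj)
  rw [prod_cons]
  congr 1
  · simp [hki]
  · exact prod_congr rfl fun j hj => by simp [hne j hj]

theorem homogOn_cons_succ {i : ι} {t : Finset ι} (hi : i ∉ t) (m : ℕ) :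
    homogOn (cons i t hi) (m + 1) x
      = x i * homogOn (cons i t hi) m x + homogOn t (m + 1) x := by
  rw [homogOn_cons, homogOn_cons, Nat.antidiagonal_succ, sum_cons, sum_map, mul_sum, add_comm]
  simp only [Function.Embedding.coe_prodMap, Function.Embedding.coeFn_mk,
    Function.Embedding.refl_apply, Prod.map_fst, Prod.map_snd, pow_zero, one_mul, pow_succ]
  congr 1
  exact sum_congr rfl fun p _ => by ring

end homogOn

section divDiffPow

variable {ι F : Type*} [DecidableEq ι] [Field F] (x : ι → F)

theorem divDiffPow_cons_succ {i : ι} {t : Finset ι} (hi : i ∉ t) (hx : ∀ j ∈ t, x j ≠ x i)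
    (r : ℕ) :
    divDiffPow (cons i t hi) x (r + 1)
      = x i * divDiffPow (cons i t hi) x r + divDiffPow t x r := by
  simp only [divDiffPow, sum_cons, erase_cons, mul_add, mul_sum, add_assoc,
    ← sum_add_distrib]
  congr 1
  · rw [pow_succ, mul_comm _ (x i), mul_div_assoc]
  refine sum_congr rfl fun j hj => ?_
  have hij : i ≠ j := fun h => hi (h ▸ hj)
  have hsub : x j - x i ≠ 0 := sub_ne_zero.mpr (hx j hj)
  rw [erase_cons_of_ne hi hij, prod_cons]
  field_simp
  ring

theorem divDiffPow_card_sub_one {s : Finset ι} (hs : s.Nonempty) (hx : Set.InjOn x s) :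
    divDiffPow s x (#s - 1) = 1 := by
  have hdeg : (Polynomial.X ^ (#s - 1) : Polynomial F).degree < #s := by
    rw [Polynomial.degree_X_pow]
    exact_mod_cast Nat.sub_lt hs.card_pos one_pos
  simpa [divDiffPow] using (Lagrange.coeff_eq_sum hx hdeg).symm

theorem divDiffPow_add_card_sub_one (m : ℕ) :
    ∀ s : Finset ι, s.Nonempty → Set.InjOn x s → divDiffPow s x (m + #s - 1) = homogOn s m x := by
  induction m with
  | zero =>
    intro s hs hx
    simp [divDiffPow_card_sub_one x hs hx, homogOn]
  | succ m ih =>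
    suffices ∀ s : Finset ι, Set.InjOn x s → divDiffPow s x (m + #s) = homogOn s (m + 1) x by
      intro s _ hx
      rw [← this s hx]
      congr 1
      omega
    intro s
    induction s using Finset.cons_induction with
    | empty => simp [divDiffPow, homogOn]
    | cons i t hi iht =>
      intro hx
      have hxt : Set.InjOn x t := hx.mono (coe_subset.mpr (subset_cons hi))
      have hxi : ∀ j ∈ t, x j ≠ x i := fun j hj h =>
        hi (hx (by simp [hj]) (by simp) h ▸ hj)
      calc divDiffPow (cons i t hi) x (m + #(cons i t hi))
          = x i * divDiffPow (cons i t hi) x (m + #t) + divDiffPow t x (m + #t) := by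
            rw [card_cons, ← add_assoc, divDiffPow_cons_succ x hi hxi]
        _ = x i * homogOn (cons i t hi) m x + homogOn t (m + 1) x := by
            rw [← ih _ (cons_nonempty hi) hx, card_cons, ← add_assoc, Nat.add_sub_cancel, iht hxt]
        _ = homogOn (cons i t hi) (m + 1) x := (homogOn_cons_succ x hi m).symm

end divDiffPow

theorem stmt_4_general (F : Type*) [Field F] (N : ℕ) (hN : 1 ≤ N)
    (x : Fin N → F) (hx : Function.Injective x) (m : ℕ) :
    homog m x
      = ∑ j : Fin N, x j ^ (m + N - 1) / ∏ k ∈ Finset.univ.erase j, (x j - x k) := by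
  have : Nonempty (Fin N) := Fin.pos_iff_nonempty.mp hN
  have h := divDiffPow_add_card_sub_one x m univ univ_nonempty hx.injOn
  rw [card_univ, Fintype.card_fin] at h
  exact h.symm

theorem stmt_4 (F : Type*) [Field F] [CharZero F] (N : ℕ) (hN : 1 ≤ N)
    (x : Fin N → F) (hx : Function.Injective x) (m : ℕ) :
    homog m x
      = ∑ j : Fin N, x j ^ (m + N - 1) / ∏ k ∈ Finset.univ.erase j, (x j - x k) :=
  stmt_4_general F N hN x hx m
end

section
/- For every m ≥ 0 and n ≥ 1, the identity h_m(1+x₁,…,1+xₙ) = Σ_{k=0}^m binomial(m+n−1, m−k) · h_k(x₁,…,xₙ) holds in the polynomial ring F[x₁,…,xₙ]. -/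
/-!
Expanding each `(1 + x j) ^ k j` binomially and writing `k = a + b`, the coefficient of `x ^ a`
with `|a| = s` is `∑_{|b| = m - s} ∏ j, C(a j + b j, a j)`. As `C(a j + b j, a j)` is the
coefficient of `t ^ b j` in `(1 - t) ^ (-(a j + 1))`, this sum is the coefficient of `t ^ (m - s)`
in `(1 - t) ^ (-(s + n))`, namely `C(m + n - 1, m - s)`.
-/

open Finset

theorem Finset.sum_finsuppAntidiag_eq_sum_piAntidiag {ι μ M : Type*} [DecidableEq ι]
    [AddCommMonoid μ] [HasAntidiagonal μ] [DecidableEq μ] [AddCommMonoid M]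
    (s : Finset ι) (n : μ) (g : (ι → μ) → M) :
    ∑ l ∈ s.finsuppAntidiag n, g l = ∑ f ∈ s.piAntidiag n, g f := by
  rw [finsuppAntidiag, sum_map]
  exact sum_attach _ g

theorem PowerSeries.coeff_invOneSubPow (S : Type*) [CommRing S] (d k : ℕ) :
    coeff k (invOneSubPow S d : PowerSeries S) = d.multichoose k := by
  cases d with
  | zero => cases k <;> simp [invOneSubPow_zero, coeff_one, Nat.multichoose_zero_succ]
  | succ d => simp [invOneSubPow_val_succ_eq_mk_add_choose, Nat.multichoose_eq, Nat.choose_symm_add]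

theorem Nat.sum_piAntidiag_prod_multichoose {ι : Type*} [DecidableEq ι] (s : Finset ι)
    (c : ι → ℕ) (r : ℕ) :
    ∑ b ∈ s.piAntidiag r, ∏ j ∈ s, (c j).multichoose (b j) = (∑ j ∈ s, c j).multichoose r := by
  apply Nat.cast_injective (R := ℤ)
  have hprod : (∏ j ∈ s, PowerSeries.invOneSubPow ℤ (c j) : PowerSeries ℤ)
      = PowerSeries.invOneSubPow ℤ (∑ j ∈ s, c j) := by
    simp_rw [← Units.coe_prod, PowerSeries.invOneSubPow_eq_inv_one_sub_pow, prod_pow_eq_pow_sum]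
  push_cast
  rw [← PowerSeries.coeff_invOneSubPow, ← hprod, PowerSeries.coeff_prod]
  simp only [PowerSeries.coeff_invOneSubPow]
  exact (sum_finsuppAntidiag_eq_sum_piAntidiag s r fun b => ∏ j ∈ s, _).symm

section

variable {ι : Type*} [Fintype ι] [DecidableEq ι]

theorem sum_piAntidiag_prod_choose_add (a : ι → ℕ) (r : ℕ) :
    ∑ b ∈ univ.piAntidiag r, ∏ j, (a j + b j).choose (a j)
      = (∑ j, a j + Fintype.card ι + r - 1).choose r := by
  have h := Nat.sum_piAntidiag_prod_multichoose univ (fun j => a j + 1) r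
  simp only [Nat.multichoose_eq, sum_add_distrib, sum_const, card_univ, smul_eq_mul,
    mul_one] at h
  rw [← h]
  refine sum_congr rfl fun b _ => prod_congr rfl fun j _ => ?_
  rw [Nat.add_right_comm, Nat.add_sub_cancel, Nat.choose_symm_add]

theorem sum_piAntidiag_sum_Iic {M : Type*} [AddCommMonoid M] (F : (ι → ℕ) → (ι → ℕ) → M)
    (m : ℕ) :
    ∑ k ∈ univ.piAntidiag m, ∑ a ∈ Iic k, F k a
      = ∑ s ∈ range (m + 1), ∑ a ∈ univ.piAntidiag s, ∑ b ∈ univ.piAntidiag (m - s),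
          F (a + b) a := by
  simp_rw [sum_sigma']
  refine sum_nbij' (fun x => ⟨∑ j, x.2 j, x.2, x.1 - x.2⟩) (fun y => ⟨y.2.1 + y.2.2, y.2.1⟩)
    ?_ ?_ ?_ ?_ ?_ <;>
  simp only [mem_sigma, mem_piAntidiag, mem_univ, mem_Iic, mem_range, implies_true,
    and_true, true_and, Sigma.forall]
  · rintro k a ⟨rfl, hak⟩
    exact ⟨Nat.lt_succ_of_le (sum_le_sum fun j _ => hak j), sum_tsub_distrib _ fun j _ => hak j⟩
  · rintro s a b ⟨hs, rfl, hb⟩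
    refine ⟨?_, le_add_of_nonneg_right bot_le⟩
    rw [Pi.add_def, sum_add_distrib, hb]
    omega
  · rintro k a ⟨-, hak⟩
    simp [add_tsub_cancel_of_le hak]
  · rintro s a b ⟨-, rfl, -⟩
    simp
  · rintro k a ⟨-, hak⟩
    simp [add_tsub_cancel_of_le hak]

variable {R : Type*} [CommSemiring R]

theorem prod_one_add_pow (x : ι → R) (k : ι → ℕ) :
    ∏ j, (1 + x j) ^ k j = ∑ a ∈ Iic k, ((∏ j, (k j).choose (a j) : ℕ) : R) * ∏ j, x j ^ a j := by
  have hIic : Iic k = Fintype.piFinset fun j => range (k j + 1) := by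
    ext a
    simp [Pi.le_def]
  simp_rw [add_comm (1 : R), add_pow, one_pow, mul_one]
  rw [prod_univ_sum, hIic]
  refine sum_congr rfl fun a _ => ?_
  rw [prod_mul_distrib, Nat.cast_prod, mul_comm]

theorem homog_one_add (x : ι → R) (m : ℕ) :
    homog m (fun j => 1 + x j)
      = ∑ s ∈ range (m + 1), ((m + Fintype.card ι - 1).choose (m - s) : R) * homog s x := by
  calc homog m (fun j => 1 + x j)
      = ∑ k ∈ univ.piAntidiag m, ∑ a ∈ Iic k,
          ((∏ j, (k j).choose (a j) : ℕ) : R) * ∏ j, x j ^ a j :=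
        sum_congr rfl fun k _ => prod_one_add_pow x k
    _ = ∑ s ∈ range (m + 1), ∑ a ∈ univ.piAntidiag s, ∑ b ∈ univ.piAntidiag (m - s),
          ((∏ j, (a j + b j).choose (a j) : ℕ) : R) * ∏ j, x j ^ a j :=
        sum_piAntidiag_sum_Iic _ m
    _ = _ := by
      refine sum_congr rfl fun s hs => ?_
      rw [homog, mul_sum]
      refine sum_congr rfl fun a ha => ?_
      rw [mem_range] at hs
      rw [← sum_mul, ← Nat.cast_sum, sum_piAntidiag_prod_choose_add, (mem_piAntidiag.1 ha).1,
        show s + Fintype.card ι + (m - s) - 1 = m + Fintype.card ι - 1 by omega]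

end

theorem stmt_5_general (F : Type*) [Field F] (n : ℕ) (m : ℕ) :
    homog m (fun j : Fin n => 1 + (MvPolynomial.X j : MvPolynomial (Fin n) F))
      = ∑ k ∈ Finset.range (m + 1),
          ((m + n - 1).choose (m - k) : MvPolynomial (Fin n) F)
            * homog k (fun j : Fin n => MvPolynomial.X j) := by
  simpa only [Fintype.card_fin] using homog_one_add (fun j : Fin n => (MvPolynomial.X j : MvPolynomial (Fin n) F)) m

theorem stmt_5 (F : Type*) [Field F] [CharZero F] (n : ℕ) (hn : 1 ≤ n) (m : ℕ) :
    homog m (fun j : Fin n => 1 + (MvPolynomial.X j : MvPolynomial (Fin n) F))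
      = ∑ k ∈ Finset.range (m + 1),
          ((m + n - 1).choose (m - k) : MvPolynomial (Fin n) F)
            * homog k (fun j : Fin n => MvPolynomial.X j) :=
  stmt_5_general F n m
end

section
/- Let κ ∈ ℕ₀ⁿ and m ≥ 0. Then h_m(y^{[κ]}) = Σ_{k∈ℕ₀ⁿ, |k|=m} (∏_{j=1}^n binomial(κ_j + k_j − 1, k_j)) · ∏_{j=1}^n y_j^{k_j}, as an identity in the polynomial ring F[y₁,…,yₙ]. -/
open Finset

theorem Finset.card_piAntidiag_univ (ι : Type*) [Fintype ι] [DecidableEq ι] (d : ℕ) :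
    #(univ.piAntidiag d : Finset (ι → ℕ)) = (Fintype.card ι + d - 1).choose d := by
  rw [← map_sym_eq_piAntidiag, card_map, sym_univ, card_univ, Sym.card_sym_eq_choose]

section Sigma

variable {ι : Type*} {α : ι → Type*} [Fintype ι] [∀ i, Fintype (α i)]

def fiberSum (k : (Σ i, α i) → ℕ) (i : ι) : ℕ := ∑ a, k ⟨i, a⟩

theorem prod_sigma_fst_pow_eq_prod_pow_fiberSum {M : Type*} [CommMonoid M] (x : ι → M)
    (k : (Σ i, α i) → ℕ) : ∏ p, x p.1 ^ k p = ∏ i, x i ^ fiberSum k i := by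
  simp only [Fintype.prod_sigma, prod_pow_eq_pow_sum, fiberSum]

variable [DecidableEq ι] [∀ i, DecidableEq (α i)]

theorem fiberSum_mem_piAntidiag {m : ℕ} {k : (Σ i, α i) → ℕ} (hk : k ∈ univ.piAntidiag m) :
    fiberSum k ∈ (univ.piAntidiag m : Finset (ι → ℕ)) := by
  rw [mem_piAntidiag] at hk ⊢
  exact ⟨by rw [← hk.1, Fintype.sum_sigma]; rfl, fun i _ ↦ mem_univ i⟩

theorem card_filter_fiberSum_eq {m : ℕ} {d : ι → ℕ} (hd : d ∈ univ.piAntidiag m) :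
    #{k ∈ (univ.piAntidiag m : Finset ((Σ i, α i) → ℕ)) | fiberSum k = d}
      = ∏ i, (Fintype.card (α i) + d i - 1).choose (d i) := by
  have hcurry : #{k ∈ (univ.piAntidiag m : Finset ((Σ i, α i) → ℕ)) | fiberSum k = d}
      = #(Fintype.piFinset fun i ↦ (univ.piAntidiag (d i) : Finset (α i → ℕ))) := by
    refine card_equiv (Equiv.piCurry fun _ _ ↦ ℕ) fun k ↦ ?_
    simp only [mem_filter, Fintype.mem_piFinset, mem_piAntidiag, mem_univ, implies_true, and_true,
      funext_iff]
    refine ⟨fun h ↦ h.2, fun h ↦ ⟨?_, h⟩⟩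
    rw [Fintype.sum_sigma, ← (mem_piAntidiag.mp hd).1]
    exact sum_congr rfl fun i _ ↦ h i
  rw [hcurry, Fintype.card_piFinset]
  exact prod_congr rfl fun i _ ↦ by rw [card_piAntidiag_univ]

theorem homog_sigma_fst {R : Type*} [CommSemiring R] (m : ℕ) (x : ι → R) :
    homog m (fun p : Σ i, α i ↦ x p.1)
      = ∑ d ∈ univ.piAntidiag m,
          (∏ i, ((Fintype.card (α i) + d i - 1).choose (d i) : R)) * ∏ i, x i ^ d i := by
  rw [homog, ← sum_fiberwise_of_maps_to fun k ↦ fiberSum_mem_piAntidiag (α := α) (m := m)]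
  refine sum_congr rfl fun d hd ↦ ?_
  have hterm : ∀ k ∈ {k ∈ (univ.piAntidiag m : Finset ((Σ i, α i) → ℕ)) |
      fiberSum k = d}, ∏ p, x p.1 ^ k p = ∏ i, x i ^ d i := by
    intro k hk
    obtain ⟨-, rfl⟩ := mem_filter.mp hk
    exact prod_sigma_fst_pow_eq_prod_pow_fiberSum x k
  rw [sum_congr rfl hterm, sum_const, card_filter_fiberSum_eq hd, nsmul_eq_mul, Nat.cast_prod]

end Sigma

theorem stmt_7_general (F : Type*) [Field F] (n : ℕ) (κ : Fin n → ℕ) (m : ℕ) :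
    homog m (fun p : Σ s : Fin n, Fin (κ s) => (MvPolynomial.X p.1 : MvPolynomial (Fin n) F))
      = ∑ k ∈ (Finset.univ.piAntidiag m : Finset (Fin n → ℕ)),
          (∏ j, ((κ j + k j - 1).choose (k j) : MvPolynomial (Fin n) F))
            * ∏ j, MvPolynomial.X j ^ k j := by
  simpa only [Fintype.card_fin] using
    homog_sigma_fst (α := fun j ↦ Fin (κ j)) m (MvPolynomial.X (R := F))

theorem stmt_7 (F : Type*) [Field F] [CharZero F] (n : ℕ) (κ : Fin n → ℕ) (m : ℕ) :
    homog m (fun p : Σ s : Fin n, Fin (κ s) => (MvPolynomial.X p.1 : MvPolynomial (Fin n) F))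
      = ∑ k ∈ (Finset.univ.piAntidiag m : Finset (Fin n → ℕ)),
          (∏ j, ((κ j + k j - 1).choose (k j) : MvPolynomial (Fin n) F))
            * ∏ j, MvPolynomial.X j ^ k j :=
  stmt_7_general F n κ m
end

section
/- Let κ ∈ ℕⁿ, s ∈ {1,…,n}, and F_s(t) = ∏_{j≠s} (t−y_j)^{−κ_j}. Then for every m with 0 ≤ m ≤ κ_s − 1, the m-th formal derivative satisfies F_s^{(m)}(y_s) = m! · B_{y,κ,s,κ_s−m}, where B_{y,κ,s,r} = (−1)^{|κ|−κ_s} (∏_{d≠s}(y_d−y_s)^{−κ_d}) h_{κ_s−r}((1/(y_d−y_s))_{d≠s} each repeated κ_d times), as an identity in F(y₁,…,yₙ). -/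
/-- The coefficient `B_{y,κ,s,r}`. -/
noncomputable def Bcoef {K : Type*} [Field K] {n : ℕ} (y : Fin n → K) (κ : Fin n → ℕ)
    (s : Fin n) (r : ℕ) : K :=
  (-1 : K) ^ ((∑ j, κ j) - κ s)
    * (∏ d ∈ Finset.univ.erase s, (y d - y s) ^ κ d)⁻¹
    * homog (κ s - r)
        (fun p : Σ d : {d : Fin n // d ≠ s}, Fin (κ d.1) => (y p.1.1 - y s)⁻¹)

/-- Formal derivative of a rational function. -/
noncomputable def rderiv {F : Type*} [Field F] (f : RatFunc F) : RatFunc F :=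
  (algebraMap (Polynomial F) (RatFunc F) (Polynomial.derivative f.num)
      * algebraMap (Polynomial F) (RatFunc F) f.denom
    - algebraMap (Polynomial F) (RatFunc F) f.num
      * algebraMap (Polynomial F) (RatFunc F) (Polynomial.derivative f.denom))
  / algebraMap (Polynomial F) (RatFunc F) f.denom ^ 2

section Aux
open Polynomial Finset

lemma alg_cross {K : Type*} [Field K] (p q : Polynomial K) (hq : q ≠ 0) :
    p * (algebraMap (Polynomial K) (RatFunc K) p
        / algebraMap (Polynomial K) (RatFunc K) q).denom
      = q * (algebraMap (Polynomial K) (RatFunc K) p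
        / algebraMap (Polynomial K) (RatFunc K) q).num := by
  set f := algebraMap (Polynomial K) (RatFunc K) p / algebraMap (Polynomial K) (RatFunc K) q
    with hf
  have hD : f.denom ≠ 0 := f.denom_ne_zero
  have hDz : algebraMap (Polynomial K) (RatFunc K) f.denom ≠ 0 := RatFunc.algebraMap_ne_zero hD
  have hqz : algebraMap (Polynomial K) (RatFunc K) q ≠ 0 := RatFunc.algebraMap_ne_zero hq
  have h1 : algebraMap (Polynomial K) (RatFunc K) f.num
      / algebraMap (Polynomial K) (RatFunc K) f.denom
      = algebraMap (Polynomial K) (RatFunc K) p / algebraMap (Polynomial K) (RatFunc K) q :=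
    f.num_div_denom
  rw [div_eq_div_iff hDz hqz] at h1
  apply RatFunc.algebraMap_injective K
  rw [map_mul, map_mul]
  linear_combination -h1

lemma rderiv_div {K : Type*} [Field K] (p q : Polynomial K) (hq : q ≠ 0) :
    rderiv (algebraMap (Polynomial K) (RatFunc K) p / algebraMap (Polynomial K) (RatFunc K) q)
      = (algebraMap (Polynomial K) (RatFunc K) (Polynomial.derivative p)
            * algebraMap (Polynomial K) (RatFunc K) q
          - algebraMap (Polynomial K) (RatFunc K) p
            * algebraMap (Polynomial K) (RatFunc K) (Polynomial.derivative q))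
        / algebraMap (Polynomial K) (RatFunc K) q ^ 2 := by
  set f := algebraMap (Polynomial K) (RatFunc K) p / algebraMap (Polynomial K) (RatFunc K) q
    with hf
  have hD : f.denom ≠ 0 := f.denom_ne_zero
  have hDz : algebraMap (Polynomial K) (RatFunc K) f.denom ≠ 0 := RatFunc.algebraMap_ne_zero hD
  have hqz : algebraMap (Polynomial K) (RatFunc K) q ≠ 0 := RatFunc.algebraMap_ne_zero hq
  have hcross : p * f.denom = q * f.num := alg_cross p q hq
  have hcross' : derivative p * f.denom + p * derivative f.denom
      = derivative q * f.num + q * derivative f.num := by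
    have h := congrArg Polynomial.derivative hcross
    simpa [Polynomial.derivative_mul] using h
  have hpoly : (derivative f.num * f.denom - f.num * derivative f.denom) * q ^ 2
      = (derivative p * q - p * derivative q) * f.denom ^ 2 := by
    linear_combination (derivative f.denom * q + derivative q * f.denom) * hcross
      - q * f.denom * hcross'
  rw [rderiv, div_eq_div_iff (pow_ne_zero 2 hDz) (pow_ne_zero 2 hqz)]
  simpa only [← map_pow, ← map_mul, ← map_sub] using
    congrArg (algebraMap (Polynomial K) (RatFunc K)) hpoly

noncomputable def Hsum {ι : Type*} [DecidableEq ι] {R : Type*} [CommSemiring R]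
    (r : ℕ) (S : Finset ι) (x : ι → R) : R :=
  ∑ k ∈ S.piAntidiag r, ∏ j ∈ S, x j ^ k j

section Hsum
variable {ι : Type*} [DecidableEq ι] {R : Type*} [CommSemiring R] {i : ι} {S : Finset ι}
  {x : ι → R}

lemma Hsum_zero : Hsum 0 S x = 1 := by simp [Hsum]

lemma Hsum_empty {r : ℕ} (hr : r ≠ 0) : Hsum r (∅ : Finset ι) x = 0 := by
  simp [Hsum, piAntidiag_empty_of_ne_zero hr]

lemma Hsum_cons (hi : i ∉ S) (r : ℕ) :
    Hsum r (cons i S hi) x = ∑ p ∈ antidiagonal r, x i ^ p.1 * Hsum p.2 S x := by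
  rw [Hsum, piAntidiag_cons hi, sum_disjiUnion]
  refine sum_congr rfl fun p hp => ?_
  rw [Hsum, mul_sum, sum_map]
  refine sum_congr rfl fun f hf => ?_
  have hfi : f i = 0 := by
    rw [mem_piAntidiag] at hf
    by_contra h
    exact hi (hf.2 i h)
  simp only [addRightEmbedding_apply, Pi.add_apply, prod_cons]
  congr 1
  · simp [hfi]
  · refine prod_congr rfl fun j hj => ?_
    rw [if_neg (by rintro rfl; exact hi hj), add_zero]

lemma Hsum_succ_cons (hi : i ∉ S) (r : ℕ) :
    Hsum (r + 1) (cons i S hi) x = Hsum (r + 1) S x + x i * Hsum r (cons i S hi) x := by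
  rw [Hsum_cons hi (r + 1), Hsum_cons hi r, Nat.antidiagonal_succ, sum_cons, pow_zero, one_mul,
    sum_map, mul_sum]
  congr 1
  refine sum_congr rfl fun p hp => ?_
  simp only [Function.Embedding.coe_prodMap, Function.Embedding.coeFn_mk,
    Function.Embedding.refl_apply, Prod.map_fst, Prod.map_snd, Prod.map_apply]
  rw [pow_succ]
  ring

lemma map_Hsum {R' : Type*} [CommSemiring R'] (f : R →+* R') (r : ℕ) (S : Finset ι) (x : ι → R) :
    f (Hsum r S x) = Hsum r S fun a => f (x a) := by
  simp [Hsum, map_sum, map_prod, map_pow]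

end Hsum

lemma key_dvd {ι : Type*} [DecidableEq ι] {R : Type*} [CommRing R]
    (S : Finset ι) (x : ι → R) (z : R) (m : ℕ) :
    z ^ (m + 1) ∣ (∏ a ∈ S, (1 - x a * z)) * (∑ r ∈ range (m + 1), Hsum r S x * z ^ r) - 1 := by
  induction S using Finset.cons_induction with
  | empty =>
    have hsum : ∑ r ∈ range (m + 1), Hsum r (∅ : Finset ι) x * z ^ r = 1 := by
      rw [Finset.sum_range_succ']
      simp [Hsum_empty, Hsum_zero]
    rw [hsum]
    simp
  | cons i S hi IH =>
    have hxz : ∑ r ∈ range m, x i * Hsum r (cons i S hi) x * z ^ (r + 1)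
        = x i * z * ∑ r ∈ range m, Hsum r (cons i S hi) x * z ^ r := by
      rw [mul_sum]
      exact sum_congr rfl fun r _ => by ring
    have key1 : ∑ r ∈ range (m + 1), Hsum r (cons i S hi) x * z ^ r
        = (∑ r ∈ range (m + 1), Hsum r S x * z ^ r)
          + x i * z * ∑ r ∈ range m, Hsum r (cons i S hi) x * z ^ r := by
      rw [Finset.sum_range_succ' (fun r => Hsum r (cons i S hi) x * z ^ r) m,
        Finset.sum_range_succ' (fun r => Hsum r S x * z ^ r) m]
      simp only [Hsum_succ_cons hi, Hsum_zero, add_mul, pow_zero, mul_one]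
      rw [sum_add_distrib, hxz]
      ring
    have key2 : ∑ r ∈ range (m + 1), Hsum r (cons i S hi) x * z ^ r
        = (∑ r ∈ range m, Hsum r (cons i S hi) x * z ^ r)
          + Hsum m (cons i S hi) x * z ^ m := sum_range_succ _ m
    obtain ⟨w, hw⟩ := IH
    refine ⟨w - x i * Hsum m (cons i S hi) x * ∏ a ∈ S, (1 - x a * z), ?_⟩
    have h3 : (1 - x i * z) * (∑ r ∈ range (m + 1), Hsum r (cons i S hi) x * z ^ r)
        = (∑ r ∈ range (m + 1), Hsum r S x * z ^ r)
          - x i * Hsum m (cons i S hi) x * z ^ (m + 1) := by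
      linear_combination key1 - (x i * z) * key2
    rw [prod_cons]
    linear_combination (∏ a ∈ S, (1 - x a * z)) * h3 + hw

lemma homog_eq_Hsum {ι : Type*} [Fintype ι] [DecidableEq ι] {R : Type*} [CommSemiring R]
    (m : ℕ) (x : ι → R) : homog m x = Hsum m Finset.univ x := rfl

end Aux

theorem stmt_13 (K : Type*) [Field K] (n : ℕ) (y : Fin n → K) (hy : Function.Injective y)
    (κ : Fin n → ℕ) (hκ : ∀ j, 1 ≤ κ j) (s : Fin n) (m : ℕ) (hm : m < κ s) :
    RatFunc.eval (RingHom.id K) (y s)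
        (rderiv^[m] ((∏ j ∈ Finset.univ.erase s,
          (RatFunc.X - RatFunc.C (y j)) ^ κ j)⁻¹))
      = m.factorial * Bcoef y κ s (κ s - m) := by
  classical
  set v : Polynomial K := Polynomial.X - Polynomial.C (y s) with hv
  set Q : Polynomial K := ∏ j ∈ Finset.univ.erase s, (Polynomial.X - Polynomial.C (y j)) ^ κ j
    with hQ
  set xK : (Σ d : {d : Fin n // d ≠ s}, Fin (κ d.1)) → K := fun p => (y p.1.1 - y s)⁻¹ with hxK
  set Kc : K := (-1 : K) ^ ((∑ j, κ j) - κ s)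
      * (∏ d ∈ Finset.univ.erase s, (y d - y s) ^ κ d)⁻¹ with hKc
  set T : Polynomial K := ∑ r ∈ Finset.range (m + 1),
      Polynomial.C (Kc * homog r xK) * v ^ r with hT
  have hys : ∀ j ∈ Finset.univ.erase s, y j - y s ≠ 0 := fun j hj =>
    sub_ne_zero.2 fun h => (Finset.mem_erase.1 hj).1 (hy h)
  have hprod_ne : (∏ d ∈ Finset.univ.erase s, (y d - y s) ^ κ d) ≠ 0 :=
    Finset.prod_ne_zero_iff.2 fun d hd => pow_ne_zero _ (hys d hd)
  have hE : (∑ j, κ j) - κ s = ∑ j ∈ Finset.univ.erase s, κ j := by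
    rw [← Finset.sum_erase_add Finset.univ κ (Finset.mem_univ s)]
    exact Nat.add_sub_cancel _ _
  have hbase : ∀ j ∈ Finset.univ.erase s, Polynomial.X - Polynomial.C (y j)
      = Polynomial.C (y s - y j) * (1 - Polynomial.C ((y j - y s)⁻¹) * v) := by
    intro j hj
    have h0 := hys j hj
    have hab : (y s - y j) * (y j - y s)⁻¹ = -1 := by
      rw [← neg_sub, neg_mul, mul_inv_cancel₀ h0]
    rw [hv, mul_sub, mul_one, ← mul_assoc, ← Polynomial.C_mul, hab, Polynomial.C_neg,
      Polynomial.C_1, Polynomial.C_sub]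
    ring
  have hU : ((-1 : K) ^ ((∑ j, κ j) - κ s)) * ∏ d ∈ Finset.univ.erase s, (y d - y s) ^ κ d
      = ∏ d ∈ Finset.univ.erase s, (y s - y d) ^ κ d := by
    rw [hE, ← Finset.prod_pow_eq_pow_sum, ← Finset.prod_mul_distrib]
    exact Finset.prod_congr rfl fun d hd => by rw [← neg_pow (y d - y s) (κ d), neg_sub]
  have hQfact : Q = Polynomial.C ((-1 : K) ^ ((∑ j, κ j) - κ s)
        * ∏ d ∈ Finset.univ.erase s, (y d - y s) ^ κ d)
      * ∏ a : (Σ d : {d : Fin n // d ≠ s}, Fin (κ d.1)),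
          (1 - Polynomial.C (xK a) * v) := by
    rw [hQ, Finset.prod_congr rfl (fun j hj => by rw [hbase j hj, mul_pow]),
      Finset.prod_mul_distrib]
    congr 1
    · rw [hU, map_prod]
      exact Finset.prod_congr rfl fun d _ => (Polynomial.C_pow).symm
    · rw [Finset.prod_subtype (Finset.univ.erase s) (p := fun d => d ≠ s)
        (by simp [Finset.mem_erase])
        (fun j => (1 - Polynomial.C ((y j - y s)⁻¹) * v) ^ κ j)]
      · rw [← Finset.univ_sigma_univ, Finset.prod_sigma]
        simp [Finset.prod_const, Finset.card_univ, hxK]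
      · infer_instance
  have hcc : Kc * (((-1 : K) ^ ((∑ j, κ j) - κ s))
      * ∏ d ∈ Finset.univ.erase s, (y d - y s) ^ κ d) = 1 := by
    have h2 : ((-1 : K) ^ ((∑ j, κ j) - κ s)) * ((-1 : K) ^ ((∑ j, κ j) - κ s)) = 1 := by
      rw [← pow_add]
      exact Even.neg_one_pow ⟨_, rfl⟩
    calc Kc * (((-1 : K) ^ ((∑ j, κ j) - κ s))
          * ∏ d ∈ Finset.univ.erase s, (y d - y s) ^ κ d)
        = (((-1 : K) ^ ((∑ j, κ j) - κ s)) * ((-1 : K) ^ ((∑ j, κ j) - κ s)))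
          * ((∏ d ∈ Finset.univ.erase s, (y d - y s) ^ κ d)⁻¹
            * ∏ d ∈ Finset.univ.erase s, (y d - y s) ^ κ d) := by rw [hKc]; ring
      _ = 1 := by rw [h2, inv_mul_cancel₀ hprod_ne, one_mul]
  have hmain : v ^ (m + 1) ∣ 1 - T * Q := by
    have hkey := key_dvd (Finset.univ : Finset (Σ d : {d : Fin n // d ≠ s}, Fin (κ d.1)))
      (fun a => Polynomial.C (xK a)) v m
    have hTfact : T = Polynomial.C Kc
        * ∑ r ∈ Finset.range (m + 1),
            Hsum r Finset.univ (fun a => Polynomial.C (xK a)) * v ^ r := by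
      rw [hT, Finset.mul_sum]
      refine Finset.sum_congr rfl fun r _ => ?_
      rw [homog_eq_Hsum, ← map_Hsum (Polynomial.C : K →+* Polynomial K), Polynomial.C_mul,
        mul_assoc]
    have hcc2 : Polynomial.C Kc * Polynomial.C (((-1 : K) ^ ((∑ j, κ j) - κ s))
        * ∏ d ∈ Finset.univ.erase s, (y d - y s) ^ κ d) = 1 := by
      rw [← Polynomial.C_mul, hcc, Polynomial.C_1]
    have hTQ : T * Q
        = (∏ a : (Σ d : {d : Fin n // d ≠ s}, Fin (κ d.1)), (1 - Polynomial.C (xK a) * v))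
          * ∑ r ∈ Finset.range (m + 1),
              Hsum r Finset.univ (fun a => Polynomial.C (xK a)) * v ^ r := by
      rw [hTfact]
      conv_lhs => rw [hQfact]
      rw [mul_mul_mul_comm, hcc2, one_mul]
      exact mul_comm _ _
    rw [hTQ]
    have h4 := dvd_neg.2 hkey
    rw [neg_sub] at h4
    exact h4
  have hQeval : Q.eval (y s) ≠ 0 := by
    rw [hQ, Polynomial.eval_prod]
    refine Finset.prod_ne_zero_iff.2 fun j hj => ?_
    rw [Polynomial.eval_pow, Polynomial.eval_sub, Polynomial.eval_X, Polynomial.eval_C]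
    exact pow_ne_zero _ (sub_ne_zero.2 fun h => (Finset.mem_erase.1 hj).1 (hy h).symm)
  have hQne : Q ≠ 0 := fun h => hQeval (by rw [h, Polynomial.eval_zero])
  have hF : (∏ j ∈ Finset.univ.erase s, (RatFunc.X - RatFunc.C (y j)) ^ κ j)⁻¹
      = algebraMap (Polynomial K) (RatFunc K) 1 / algebraMap (Polynomial K) (RatFunc K) Q := by
    rw [map_one, one_div, hQ, map_prod]
    congr 1
    refine Finset.prod_congr rfl fun j hj => ?_
    rw [map_pow, map_sub, RatFunc.algebraMap_X, RatFunc.algebraMap_C]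
  have invar : ∀ i, i ≤ m → ∃ a b : Polynomial K, b.eval (y s) ≠ 0 ∧
      (v ^ (m + 1 - i) ∣ a - (Polynomial.derivative^[i] T) * b) ∧
      rderiv^[i] (algebraMap (Polynomial K) (RatFunc K) 1
          / algebraMap (Polynomial K) (RatFunc K) Q)
        = algebraMap (Polynomial K) (RatFunc K) a / algebraMap (Polynomial K) (RatFunc K) b := by
    intro i
    induction i with
    | zero =>
      intro _
      refine ⟨1, Q, hQeval, ?_, rfl⟩
      simpa using hmain
    | succ i IH =>
      intro hi1
      obtain ⟨a, b, hbe, hdvd, hrep⟩ := IH (Nat.le_of_succ_le hi1)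
      have hbne : b ≠ 0 := fun h => hbe (by rw [h, Polynomial.eval_zero])
      have hk : m + 1 - i = m - i + 1 := by omega
      rw [hk] at hdvd
      obtain ⟨w, hw⟩ := hdvd
      have hw' : a = Polynomial.derivative^[i] T * b + v ^ (m - i + 1) * w := by
        linear_combination hw
      have hdv : Polynomial.derivative v = 1 := by
        rw [hv]; exact Polynomial.derivative_X_sub_C _
      have hyp2 : Polynomial.derivative a
          = Polynomial.derivative (Polynomial.derivative^[i] T) * b
            + Polynomial.derivative^[i] T * Polynomial.derivative b
            + Polynomial.C ((m - i + 1 : ℕ) : K) * v ^ (m - i) * w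
            + v ^ (m - i + 1) * Polynomial.derivative w := by
        rw [hw', Polynomial.derivative_add, Polynomial.derivative_mul, Polynomial.derivative_mul,
          Polynomial.derivative_pow, hdv, mul_one, Nat.add_sub_cancel]
        ring
      refine ⟨Polynomial.derivative a * b - a * Polynomial.derivative b, b ^ 2,
        by rw [Polynomial.eval_pow]; exact pow_ne_zero 2 hbe, ?_, ?_⟩
      · have hsub : m + 1 - (i + 1) = m - i := by omega
        rw [hsub, Function.iterate_succ_apply']
        refine ⟨Polynomial.C ((m - i + 1 : ℕ) : K) * w * b
          + v * (Polynomial.derivative w * b - w * Polynomial.derivative b), ?_⟩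
        linear_combination b * hyp2 - Polynomial.derivative b * hw'
      · rw [Function.iterate_succ_apply', hrep, rderiv_div a b hbne, map_sub, map_mul, map_mul,
          map_pow]
  obtain ⟨a, b, hbe, hdvd, hrep⟩ := invar m le_rfl
  rw [hF, hrep]
  have hbne : b ≠ 0 := fun h => hbe (by rw [h, Polynomial.eval_zero])
  set f := algebraMap (Polynomial K) (RatFunc K) a / algebraMap (Polynomial K) (RatFunc K) b
    with hfd
  obtain ⟨bb, hbb⟩ := (RatFunc.denom_dvd hbne).2 ⟨a, hfd⟩
  have hde : (f.denom).eval (y s) ≠ 0 := fun h =>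
    hbe (by rw [hbb, Polynomial.eval_mul, h, zero_mul])
  have hcross : a * f.denom = b * f.num := alg_cross a b hbne
  have hid : ∀ q : Polynomial K, Polynomial.eval₂ (RingHom.id K) (y s) q = q.eval (y s) :=
    fun q => rfl
  have heval : RatFunc.eval (RingHom.id K) (y s) f = a.eval (y s) / b.eval (y s) := by
    rw [RatFunc.eval, hid, hid, div_eq_div_iff hde hbe]
    have h5 := congrArg (Polynomial.eval (y s)) hcross
    rw [Polynomial.eval_mul, Polynomial.eval_mul] at h5
    linear_combination -h5
  rw [heval]
  have hm1 : m + 1 - m = 1 := by omega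
  rw [hm1, pow_one] at hdvd
  obtain ⟨w, hw⟩ := hdvd
  have haev : a.eval (y s) = (Polynomial.derivative^[m] T).eval (y s) * b.eval (y s) := by
    have h6 := congrArg (Polynomial.eval (y s)) hw
    rw [Polynomial.eval_sub, Polynomial.eval_mul, Polynomial.eval_mul, hv] at h6
    simp only [Polynomial.eval_sub, Polynomial.eval_X, Polynomial.eval_C, sub_self,
      zero_mul] at h6
    linear_combination h6
  rw [haev, mul_div_assoc, div_self hbe, mul_one]
  have hTm : (Polynomial.derivative^[m] T).eval (y s) = (m.factorial : K) * (Kc * homog m xK) := by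
    rw [hT, Polynomial.iterate_derivative_sum, Polynomial.eval_finset_sum]
    rw [Finset.sum_eq_single m]
    · rw [Polynomial.iterate_derivative_C_mul, hv, Polynomial.iterate_derivative_X_sub_pow,
        Nat.sub_self, pow_zero, Nat.descFactorial_self, Polynomial.eval_mul, Polynomial.eval_C,
        nsmul_eq_mul, mul_one, Polynomial.eval_natCast]
      ring
    · intro r hr hrm
      have hrlt : r < m := lt_of_le_of_ne (Nat.lt_succ_iff.1 (Finset.mem_range.1 hr)) hrm
      rw [Polynomial.iterate_derivative_C_mul, hv, Polynomial.iterate_derivative_X_sub_pow,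
        Nat.descFactorial_of_lt hrlt, zero_smul, mul_zero, Polynomial.eval_zero]
    · intro h
      exact absurd (Finset.self_mem_range_succ m) h
  rw [hTm]
  have hκm : κ s - (κ s - m) = m := Nat.sub_sub_self hm.le
  rw [Bcoef, hκm, ← hxK, ← hKc]
end
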